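/- An n-dimensional evolution algebra E over a field F is nilpotent if and only if there exists a natural basis {e_1, …, e_n} of E for which the matrix of structural constants A = (a_{ij}) is strictly upper triangular, i.e. a_{ij} = 0 whenever i ≥ j. -/

import Mathlib

variable {F : Type*} [Field F] {A : Type*} [AddCommGroup A] [Module F A]

def mulSub (mul : A →ₗ[F] A →ₗ[F] A) (S T : Submodule F A) : Submodule F A :=
  Submodule.span F {z : A | ∃ x ∈ S, ∃ y ∈ T, mul x y = z}

/-- The powers `E^k`: `E^1 = E` and `E^k = Σ_{i=1}^{k-1} E^i E^{k-i}`. -/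
def powSeq (mul : A →ₗ[F] A →ₗ[F] A) : ℕ → Submodule F A
  | 0 => ⊤
  | 1 => ⊤
  | k + 2 => ⨆ i : Fin (k + 1), mulSub mul (powSeq mul (i + 1)) (powSeq mul (k + 1 - i))
  termination_by n => n
  decreasing_by
  all_goals (have := i.isLt; omega)

/-- A basis is natural if the product of distinct basis vectors vanishes. -/
def IsNaturalBasis {ι : Type*} (mul : A →ₗ[F] A →ₗ[F] A) (e : Module.Basis ι F A) : Prop :=
  ∀ i j, i ≠ j → mul (e i) (e j) = 0

/-! If `E^N = 0`, the directed graph with an edge `i → j` whenever `a_{ij} ≠ 0` is acyclic: along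
an edge, `e_j · e_i² = a_{ij} e_j²`, so `e_j²` lies one power of `E` deeper than `e_i²`, and a cycle
would put the nonzero vector `e_i²` in every `E^m`. Numbering the basis along a topological order
of this graph makes the structure matrix strictly upper triangular. Conversely, for a strictly
upper triangular structure matrix the subspaces `V_m = span {e_j | j ≥ m}` satisfy
`E V_m ⊆ V_{m+1}`, hence `E^k ⊆ V_t` once `k > 2^t`, and `V_n = 0`. -/

open Module

section PowSeq

variable (mul : A →ₗ[F] A →ₗ[F] A)

lemma mem_mulSub {S T : Submodule F A} {x y : A} (hx : x ∈ S) (hy : y ∈ T) :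
    mul x y ∈ mulSub mul S T :=
  Submodule.subset_span ⟨x, hx, y, hy, rfl⟩

lemma mulSub_le {S T W : Submodule F A} (h : ∀ x ∈ S, ∀ y ∈ T, mul x y ∈ W) :
    mulSub mul S T ≤ W :=
  Submodule.span_le.2 <| by rintro _ ⟨x, hx, y, hy, rfl⟩; exact h x hx y hy

lemma mulSub_mono {S S' T T' : Submodule F A} (hS : S ≤ S') (hT : T ≤ T') :
    mulSub mul S T ≤ mulSub mul S' T' :=
  mulSub_le mul fun _ hx _ hy => mem_mulSub mul (hS hx) (hT hy)

lemma powSeq_zero : powSeq mul 0 = ⊤ := by rw [powSeq]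

lemma powSeq_one : powSeq mul 1 = ⊤ := by rw [powSeq]

lemma powSeq_add_two (k : ℕ) :
    powSeq mul (k + 2) =
      ⨆ i : Fin (k + 1), mulSub mul (powSeq mul (i + 1)) (powSeq mul (k + 1 - i)) := by
  rw [powSeq]

lemma mulSub_powSeq_le {a b : ℕ} (ha : 1 ≤ a) (hb : 1 ≤ b) :
    mulSub mul (powSeq mul a) (powSeq mul b) ≤ powSeq mul (a + b) := by
  obtain ⟨i, rfl⟩ := Nat.exists_eq_add_of_le' ha
  obtain ⟨j, rfl⟩ := Nat.exists_eq_add_of_le' hb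
  rw [show i + 1 + (j + 1) = i + j + 2 by omega, powSeq_add_two]
  convert le_iSup _ (⟨i, by omega⟩ : Fin (i + j + 1)) using 1
  simp only [show i + j + 1 - i = j + 1 by omega]

lemma mul_mem_powSeq_succ {m : ℕ} (hm : 1 ≤ m) {x : A} (hx : x ∈ powSeq mul m) (y : A) :
    mul x y ∈ powSeq mul (m + 1) :=
  mulSub_powSeq_le mul hm le_rfl <|
    mem_mulSub mul hx ((powSeq_one mul).symm ▸ Submodule.mem_top)

lemma powSeq_succ_le : ∀ k, powSeq mul (k + 1) ≤ powSeq mul k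
  | 0 => (powSeq_zero mul).symm ▸ le_top
  | 1 => (powSeq_one mul).symm ▸ le_top
  | k + 2 => by
    rw [powSeq_add_two mul (k + 1)]
    refine iSup_le fun i => ?_
    -- shrink the factor of larger exponent, which is at least 2
    rcases Nat.eq_zero_or_pos (i : ℕ) with hi | hi
    · rw [hi]
      calc mulSub mul (powSeq mul (0 + 1)) (powSeq mul (k + 1 + 1 - 0))
          ≤ mulSub mul (powSeq mul 1) (powSeq mul (k + 1)) :=
            mulSub_mono mul le_rfl (powSeq_succ_le (k + 1))
        _ ≤ powSeq mul (1 + (k + 1)) := mulSub_powSeq_le mul le_rfl (by omega)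
        _ = powSeq mul (k + 2) := by rw [Nat.add_comm]
    · have := i.isLt
      calc mulSub mul (powSeq mul (i + 1)) (powSeq mul (k + 1 + 1 - i))
          ≤ mulSub mul (powSeq mul i) (powSeq mul (k + 2 - i)) :=
            mulSub_mono mul (powSeq_succ_le i) le_rfl
        _ ≤ powSeq mul (i + (k + 2 - i)) := mulSub_powSeq_le mul hi (by omega)
        _ = powSeq mul (k + 2) := by congr 1; omega

lemma powSeq_antitone : Antitone (powSeq mul) :=
  antitone_nat_of_succ_le (powSeq_succ_le mul)

/-- One of the two factors of every product in `E^k`, `k > 2^(t+1)`, has exponent above `2^t`. -/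
lemma powSeq_le_of_mul_mem (hcomm : ∀ x y : A, mul x y = mul y x) {V : ℕ → Submodule F A}
    (hV₀ : V 0 = ⊤) (hV : ∀ m, ∀ x ∈ V m, ∀ y, mul x y ∈ V (m + 1)) :
    ∀ t k, 2 ^ t < k → powSeq mul k ≤ V t
  | 0, _, _ => hV₀ ▸ le_top
  | t + 1, k, hk => by
    obtain ⟨k, rfl⟩ : ∃ k', k = k' + 2 := ⟨k - 2, by have := Nat.one_le_two_pow (n := t); grind⟩
    rw [powSeq_add_two]
    refine iSup_le fun i => mulSub_le mul fun x hx y hy => ?_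
    have := i.isLt
    rcases (by grind : 2 ^ t < (i : ℕ) + 1 ∨ 2 ^ t < k + 1 - i) with hi | hi
    · exact hV t x (powSeq_le_of_mul_mem hcomm hV₀ hV t _ hi hx) y
    · exact hcomm x y ▸ hV t y (powSeq_le_of_mul_mem hcomm hV₀ hV t _ hi hy) x

end PowSeq

section NaturalBasis

variable (mul : A →ₗ[F] A →ₗ[F] A) {ι : Type*} {e : Basis ι F A}

lemma IsNaturalBasis.mul_basis_left (he : IsNaturalBasis mul e) (j : ι) (y : A) :
    mul (e j) y = e.repr y j • mul (e j) (e j) := by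
  have : mul (e j) = (e.coord j).smulRight (mul (e j) (e j)) := e.ext fun k => by
    rcases eq_or_ne j k with rfl | hjk
    · simp
    · simp [he j k hjk, hjk.symm]
  exact LinearMap.congr_fun this y

lemma IsNaturalBasis.reindex {ι' : Type*} (he : IsNaturalBasis mul e) (σ : ι ≃ ι') :
    IsNaturalBasis mul (e.reindex σ) := fun i j hij => by
  simpa only [Basis.reindex_apply] using he _ _ (σ.symm.injective.ne hij)

def structGraph (e : Basis ι F A) (i j : ι) : Prop :=
  e.repr (mul (e i) (e i)) j ≠ 0

lemma structGraph_reindex {ι' : Type*} (σ : ι ≃ ι') {i j : ι'} :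
    structGraph mul (e.reindex σ) i j ↔ structGraph mul e (σ.symm i) (σ.symm j) := by
  simp only [structGraph, Basis.reindex_apply, Basis.repr_reindex_apply]

variable {mul}

lemma mul_self_mem_powSeq_succ_of_structGraph (hcomm : ∀ x y : A, mul x y = mul y x)
    (he : IsNaturalBasis mul e) {i j : ι} (hij : structGraph mul e i j)
    {m : ℕ} (hm : 1 ≤ m) (hi : mul (e i) (e i) ∈ powSeq mul m) :
    mul (e j) (e j) ∈ powSeq mul (m + 1) := by
  have hmem := hcomm (mul (e i) (e i)) (e j) ▸ mul_mem_powSeq_succ mul hm hi (e j)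
  rw [he.mul_basis_left] at hmem
  exact (Submodule.smul_mem_iff _ hij).1 hmem

lemma mul_self_mem_powSeq_succ_of_transGen (hcomm : ∀ x y : A, mul x y = mul y x)
    (he : IsNaturalBasis mul e) {i j : ι}
    (hij : Relation.TransGen (structGraph mul e) i j) {m : ℕ} (hm : 1 ≤ m)
    (hi : mul (e i) (e i) ∈ powSeq mul m) : mul (e j) (e j) ∈ powSeq mul (m + 1) := by
  induction hij with
  | single h => exact mul_self_mem_powSeq_succ_of_structGraph hcomm he h hm hi
  | tail _ hkj ih =>
    exact powSeq_antitone mul (Nat.le_succ _)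
      (mul_self_mem_powSeq_succ_of_structGraph hcomm he hkj (by omega) ih)

lemma not_transGen_structGraph_self (hcomm : ∀ x y : A, mul x y = mul y x)
    (he : IsNaturalBasis mul e) {N : ℕ} (hN : powSeq mul N = ⊥) (i : ι) :
    ¬ Relation.TransGen (structGraph mul e) i i := by
  intro hcyc
  have hmem : ∀ m, mul (e i) (e i) ∈ powSeq mul (m + 1) := by
    intro m
    induction m with
    | zero => simp [powSeq_one]
    | succ m ih => exact mul_self_mem_powSeq_succ_of_transGen hcomm he hcyc (by omega) ih
  have hzero : mul (e i) (e i) = 0 := by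
    simpa [hN] using powSeq_antitone mul (Nat.le_succ N) (hmem N)
  obtain ⟨j, hij, -⟩ := Relation.TransGen.head'_iff.1 hcyc
  exact hij (by simp [hzero])

end NaturalBasis

lemma Fin.exists_perm_lt_of_lt {α : Type*} [LinearOrder α] {n : ℕ} (f : Fin n → α) :
    ∃ σ : Equiv.Perm (Fin n), ∀ i j, f i < f j → σ i < σ j := by
  refine ⟨(Tuple.sort f)⁻¹, fun i j hij => (Tuple.monotone_sort f).reflect_lt ?_⟩
  simpa [Function.comp_def] using hij

lemma Fin.exists_perm_lt_of_acyclic {n : ℕ} {r : Fin n → Fin n → Prop}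
    (hr : ∀ i, ¬ Relation.TransGen r i i) :
    ∃ σ : Equiv.Perm (Fin n), ∀ i j, r i j → σ i < σ j := by
  have : Std.Irrefl (Relation.TransGen r) := ⟨hr⟩
  have : IsWellFounded (Fin n) (Relation.TransGen r) :=
    ⟨Finite.wellFounded_of_trans_of_irrefl _⟩
  obtain ⟨σ, hσ⟩ := Fin.exists_perm_lt_of_lt (IsWellFounded.rank (Relation.TransGen r))
  exact ⟨σ, fun i j hij => hσ i j (IsWellFounded.rank_lt_of_rel (.single hij))⟩

section StrictlyUpperTriangular

variable {n : ℕ} (e : Basis (Fin n) F A)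

def basisTail (m : ℕ) : Submodule F A :=
  Submodule.span F (e '' {j | m ≤ (j : ℕ)})

lemma basisTail_zero : basisTail e 0 = ⊤ := by
  simp [basisTail, e.span_eq]

lemma basisTail_self : basisTail e n = ⊥ := by
  simp [basisTail, Fin.is_lt]

variable {mul : A →ₗ[F] A →ₗ[F] A}

lemma mul_self_mem_basisTail (hA : ∀ i j : Fin n, j ≤ i → e.repr (mul (e i) (e i)) j = 0)
    (i : Fin n) : mul (e i) (e i) ∈ basisTail e (i + 1) := by
  rw [basisTail, Basis.mem_span_image]
  intro j hj
  by_contra hji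
  exact Finsupp.mem_support_iff.1 hj (hA i j (by rw [Set.mem_ofPred_eq] at hji; omega))

lemma mul_mem_basisTail_succ (he : IsNaturalBasis mul e)
    (hA : ∀ i j : Fin n, j ≤ i → e.repr (mul (e i) (e i)) j = 0)
    {m : ℕ} {x : A} (hx : x ∈ basisTail e m) (y : A) : mul x y ∈ basisTail e (m + 1) := by
  suffices basisTail e m ≤ (basisTail e (m + 1)).comap (mul.flip y) from this hx
  refine Submodule.span_le.2 ?_
  rintro _ ⟨j, hj, rfl⟩
  rw [SetLike.mem_coe, Submodule.mem_comap, LinearMap.flip_apply, he.mul_basis_left]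
  refine Submodule.smul_mem _ _ (Submodule.span_mono ?_ (mul_self_mem_basisTail e hA j))
  exact Set.image_mono fun k hk => by simp only [Set.mem_ofPred_eq] at hj hk ⊢; omega

end StrictlyUpperTriangular

theorem nilpotent_iff_structural_matrix_strictly_upper_triangular_general
    (n : ℕ)
    (mul : A →ₗ[F] A →ₗ[F] A) (hcomm : ∀ x y : A, mul x y = mul y x)
    (hEvol : ∃ e : Module.Basis (Fin n) F A, IsNaturalBasis mul e) :
    (∃ N : ℕ, powSeq mul N = ⊥) ↔
      ∃ e : Module.Basis (Fin n) F A, IsNaturalBasis mul e ∧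
        ∀ i j : Fin n, j ≤ i → e.repr (mul (e i) (e i)) j = 0 := by
  constructor
  · rintro ⟨N, hN⟩
    obtain ⟨e, he⟩ := hEvol
    obtain ⟨σ, hσ⟩ := Fin.exists_perm_lt_of_acyclic (not_transGen_structGraph_self hcomm he hN)
    refine ⟨e.reindex σ, he.reindex mul σ, fun i j hji => ?_⟩
    by_contra hij
    have := hσ _ _ ((structGraph_reindex mul σ).1 hij)
    simp only [Equiv.apply_symm_apply] at this
    exact absurd hji (not_le.2 this)
  · rintro ⟨e, he, hA⟩
    refine ⟨2 ^ n + 1, eq_bot_iff.2 ?_⟩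
    rw [← basisTail_self e]
    exact powSeq_le_of_mul_mem mul hcomm (basisTail_zero e)
      (fun _ _ hx => mul_mem_basisTail_succ e he hA hx) n _ (Nat.lt_succ_self _)

/-- An `n`-dimensional evolution algebra `E` over a field `F` is nilpotent
(`E^N = 0` for some `N`) iff it has a natural basis whose matrix of structural constants
`a_{ij} = (e.repr (e i * e i)) j` is strictly upper triangular, i.e. `a_{ij} = 0` whenever
`i ≥ j`. -/
theorem nilpotent_iff_structural_matrix_strictly_upper_triangular
    (n : ℕ) (hdim : Module.finrank F A = n)
    (mul : A →ₗ[F] A →ₗ[F] A) (hcomm : ∀ x y : A, mul x y = mul y x)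
    (hEvol : ∃ e : Module.Basis (Fin n) F A, IsNaturalBasis mul e) :
    (∃ N : ℕ, powSeq mul N = ⊥) ↔
      ∃ e : Module.Basis (Fin n) F A, IsNaturalBasis mul e ∧
        ∀ i j : Fin n, j ≤ i → e.repr (mul (e i) (e i)) j = 0 :=
  nilpotent_iff_structural_matrix_strictly_upper_triangular_general n mul hcomm hEvol
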